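/- For every n ≥ 1, the total number of P1-matches over all words in 𝓛_n satisfies Σ_{L ∈ 𝓛_n} P1-mch(L) = ((n+1)·binom(2n, n) − 4^n)/2. -/

import Mathlib

/-!
Words over the alphabet {E, N} are encoded as `List Bool`,
with `true` representing an east step `E` and `false` a north step `N`.
The word `w = w_1 ⋯ w_{2n}` corresponds to the lattice path from `(0,0)` to
`(n,n)` whose `j`-th step is east if `w_j = true` and north if `w_j = false`.
-/

/-- `w ∈ 𝓛_n`: the word `w` has exactly `n` `E`'s and `n` `N`'s. -/
def memL (n : ℕ) (w : List Bool) : Prop :=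
  w.count true = n ∧ w.count false = n

/-- The (0-indexed, increasing) list of positions at which the letter `b` occurs in `w`. -/
def occPos (w : List Bool) (b : Bool) : List ℕ :=
  (List.range w.length).filter (fun j => w.getD j (!b) == b)

/-- `ps_w({i, i+1})` (with `i` 1-indexed): the length-4 word obtained from `w` by
deleting, for each `j ∉ {i, i+1}`, the `j`-th occurrence of `E` and the `j`-th
occurrence of `N` (counted from left to right); i.e. the word formed by the
`i`-th and `(i+1)`-th occurrences of `E` and of `N`, read in their original order. -/
def pairedSubword (w : List Bool) (i : ℕ) : List Bool :=
  let keep : List ℕ := [(occPos w true).getD (i-1) 0, (occPos w true).getD i 0,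
                        (occPos w false).getD (i-1) 0, (occPos w false).getD i 0]
  ((List.range w.length).filter (fun j => keep.contains j)).map (fun j => w.getD j true)

/-- `P`-mch(w): the number of paired steps `i` with `1 ≤ i ≤ n-1` at which the
paired pattern `P` matches in `w ∈ 𝓛_n`. -/
def pmch (n : ℕ) (P w : List Bool) : ℕ :=
  ((Finset.Icc 1 (n-1)).filter (fun i => pairedSubword w i = P)).card

def P1 : List Bool := [true, true, false, false]   -- EENN
def P2 : List Bool := [true, false, true, false]   -- ENEN
def P3 : List Bool := [false, true, true, false]   -- NEEN
def P4 : List Bool := [true, false, false, true]   -- ENNE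
def P5 : List Bool := [false, true, false, true]   -- NENE
def P6 : List Bool := [false, false, true, true]   -- NNEE

/-!
A `P1`-match at paired step `i` means that the `(i+1)`-st `E` comes before the `i`-th `N`; as
exactly `i - 1` earlier `N`'s precede that `N`, this says that the `i`-th north step starts at
height `#E - #N ≥ 2`. So the sum counts pairs (path, north step starting at height `≥ 2`).

On a path from `(0,0)` to `(n,n)`, an east step from height `d` and a north step from height
`d + 1` traverse the same edge in opposite directions, so they are equinumerous. Hence, among the
`n` north steps, those from height `1` match the east steps from height `0`, and those from height
`≤ -1` match the east steps from height `≤ -2`: `n = N_{≥2} + E_{≤-2} + Z`, where `Z` counts the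
steps starting at height `0`. Summed over all paths, the reflection `E ↔ N` equates the totals of
`N_{≥2}` and `E_{≤-2}`, and since there are `C(2k,k) C(2n-2k,n-k)` paths at height `0` after
`2k` steps, `Z` totals `Σ_{k<n} C(2k,k) C(2n-2k,n-k) = 4^n - C(2n,n)`.
-/

open Finset

lemma sum_antidiagonal_two_mul_fst (f : ℕ → ℕ) (n : ℕ) :
    ∑ p ∈ antidiagonal n, 2 * p.1 * (f p.1 * f p.2) = n * ∑ p ∈ antidiagonal n, f p.1 * f p.2 := by
  have hswap := Nat.sum_antidiagonal_swap (n := n) (f := fun p => p.1 * (f p.1 * f p.2))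
  simp only [Prod.fst_swap, Prod.snd_swap] at hswap
  calc ∑ p ∈ antidiagonal n, 2 * p.1 * (f p.1 * f p.2)
      = ∑ p ∈ antidiagonal n, (p.1 + p.2) * (f p.1 * f p.2) := by
        simp only [two_mul, add_mul, sum_add_distrib]
        rw [← hswap]
        exact congrArg _ (sum_congr rfl fun p _ => by ring)
    _ = n * ∑ p ∈ antidiagonal n, f p.1 * f p.2 := by
        rw [mul_sum]
        exact sum_congr rfl fun p hp => by rw [mem_antidiagonal.1 hp]

lemma sum_antidiagonal_centralBinom_mul (n : ℕ) :
    ∑ p ∈ antidiagonal n, p.1.centralBinom * p.2.centralBinom = 4 ^ n := by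
  induction n with
  | zero => simp
  | succ m ih =>
    refine Nat.eq_of_mul_eq_mul_left m.succ_pos ?_
    calc (m + 1) * ∑ p ∈ antidiagonal (m + 1), p.1.centralBinom * p.2.centralBinom
        = ∑ p ∈ antidiagonal m, 2 * ((p.1 + 1) * (p.1 + 1).centralBinom) * p.2.centralBinom := by
          rw [← sum_antidiagonal_two_mul_fst, Nat.sum_antidiagonal_succ]
          simp only [mul_zero, zero_mul, zero_add, mul_assoc]
      _ = 4 * ∑ p ∈ antidiagonal m, (2 * p.1 + 1) * (p.1.centralBinom * p.2.centralBinom) := by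
          simp only [Nat.succ_mul_centralBinom_succ, mul_sum]
          exact sum_congr rfl fun p _ => by ring
      _ = (m + 1) * 4 ^ (m + 1) := by
          simp only [add_mul, one_mul, sum_add_distrib, sum_antidiagonal_two_mul_fst, ih]
          ring

lemma sum_range_centralBinom_mul_add (n : ℕ) :
    ∑ k ∈ range n, k.centralBinom * (n - k).centralBinom + n.centralBinom = 4 ^ n := by
  rw [← sum_antidiagonal_centralBinom_mul, Nat.sum_antidiagonal_eq_sum_range_succ_mk,
    sum_range_succ, Nat.sub_self, Nat.centralBinom_zero, mul_one]

lemma sum_range_two_mul {M : Type*} [AddCommMonoid M] (f : ℕ → M) (n : ℕ) :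
    ∑ j ∈ range (2 * n), f j = ∑ k ∈ range n, (f (2 * k) + f (2 * k + 1)) := by
  induction n with
  | zero => simp
  | succ n ih =>
    rw [mul_add, mul_one, sum_range_succ, sum_range_succ, sum_range_succ, ih, add_assoc]

def wordsWithCounts : ℕ → ℕ → Finset (List Bool)
  | 0, 0 => {[]}
  | a + 1, 0 => (wordsWithCounts a 0).image (true :: ·)
  | 0, b + 1 => (wordsWithCounts 0 b).image (false :: ·)
  | a + 1, b + 1 =>
      (wordsWithCounts a (b + 1)).image (true :: ·) ∪ (wordsWithCounts (a + 1) b).image (false :: ·)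

lemma mem_wordsWithCounts {a b : ℕ} {w : List Bool} :
    w ∈ wordsWithCounts a b ↔ w.count true = a ∧ w.count false = b := by
  induction w generalizing a b with
  | nil => cases a <;> cases b <;> simp [wordsWithCounts]
  | cons x t ih =>
    cases a <;> cases b <;> cases x <;> simp [wordsWithCounts, ih]

lemma card_wordsWithCounts (a b : ℕ) : #(wordsWithCounts a b) = (a + b).choose a := by
  induction a, b using wordsWithCounts.induct with
  | case1 => simp [wordsWithCounts]
  | case2 a ih => simp [wordsWithCounts, card_image_of_injective _ (List.cons_injective), ih]
  | case3 b ih => simp [wordsWithCounts, card_image_of_injective _ (List.cons_injective), ih]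
  | case4 a b ih₁ ih₂ =>
    rw [wordsWithCounts, card_union_of_disjoint, card_image_of_injective _ List.cons_injective,
      card_image_of_injective _ List.cons_injective, ih₁, ih₂,
      show a + 1 + (b + 1) = a + b + 1 + 1 by ring, Nat.choose_succ_succ, add_right_comm, add_assoc]
    simp [disjoint_left]

lemma length_of_mem_wordsWithCounts {a b : ℕ} {w : List Bool} (hw : w ∈ wordsWithCounts a b) :
    w.length = a + b := by
  rw [mem_wordsWithCounts] at hw
  rw [← List.count_true_add_count_false, hw.1, hw.2]

lemma count_map_not (w : List Bool) (b : Bool) : (w.map not).count b = w.count (!b) := by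
  simpa using List.count_map_of_injective w not Bool.not_injective (!b)

lemma map_not_mem_wordsWithCounts {a b : ℕ} {w : List Bool} (hw : w ∈ wordsWithCounts a b) :
    w.map not ∈ wordsWithCounts b a := by
  rw [mem_wordsWithCounts] at hw ⊢
  simp [count_map_not, hw]

def height (w : List Bool) : ℤ := w.count true - w.count false

lemma height_append_singleton (w : List Bool) (x : Bool) :
    height (w ++ [x]) = height w + if x then 1 else -1 := by
  cases x <;> simp [height, List.count_append] <;> ring

lemma height_map_not (w : List Bool) : height (w.map not) = -height w := by
  rw [height, height, count_map_not, count_map_not, Bool.not_true, Bool.not_false, neg_sub]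

lemma height_eq_zero_iff {u : List Bool} : height u = 0 ↔ u.count true = u.count false := by
  rw [height, sub_eq_zero, Nat.cast_inj]

lemma height_eq_zero_of_mem {n : ℕ} {w : List Bool} (hw : w ∈ wordsWithCounts n n) :
    height w = 0 := by
  rw [mem_wordsWithCounts] at hw
  rw [height_eq_zero_iff, hw.1, hw.2]

open Classical in
noncomputable def stepCount (w : List Bool) (p : Bool → ℤ → Prop) : ℕ :=
  #{j ∈ range w.length | p (w.getD j true) (height (w.take j))}

section stepCount

variable {w : List Bool} {p q r : Bool → ℤ → Prop}

lemma stepCount_congr (h : ∀ x d, p x d ↔ q x d) : stepCount w p = stepCount w q := by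
  simp only [funext fun x => funext fun d => propext (h x d)]

lemma stepCount_eq_add (h : ∀ x d, p x d ↔ q x d ∨ r x d) (hqr : ∀ x d, q x d → ¬ r x d) :
    stepCount w p = stepCount w q + stepCount w r := by
  classical
  unfold stepCount
  rw [← card_union_of_disjoint (disjoint_filter.2 fun j _ => hqr _ _), ← filter_or]
  simp only [h]

open Classical in
lemma stepCount_append_singleton (w : List Bool) (x : Bool) (p : Bool → ℤ → Prop) :
    stepCount (w ++ [x]) p = stepCount w p + if p x (height w) then 1 else 0 := by
  unfold stepCount
  rw [card_filter, card_filter, List.length_append, List.length_singleton, sum_range_succ]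
  congr 1
  · refine sum_congr rfl fun j hj => ?_
    rw [mem_range] at hj
    rw [List.getD_append _ _ _ _ hj, List.take_append_of_le_length hj.le]
  · rw [List.getD_append_right _ _ _ _ le_rfl, Nat.sub_self, List.take_left]
    rfl

lemma stepCount_letter (w : List Bool) (b : Bool) : stepCount w (fun x _ => x = b) = w.count b := by
  induction w using List.reverseRecOn with
  | nil => simp [stepCount]
  | append_singleton w y ih =>
    rw [stepCount_append_singleton, ih, List.count_append]
    cases y <;> cases b <;> simp

lemma stepCount_map_not (w : List Bool) (p : Bool → ℤ → Prop) :
    stepCount (w.map not) p = stepCount w (fun x d => p (!x) (-d)) := by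
  induction w using List.reverseRecOn with
  | nil => rfl
  | append_singleton w y ih =>
    simp only [List.map_append, List.map_singleton, stepCount_append_singleton, ih]
    rw [height_map_not]

lemma stepCount_up_sub_down (w : List Bool) (m : ℤ) :
    (stepCount w (fun x d => x = true ∧ d < m) : ℤ) - stepCount w (fun x d => x = false ∧ d ≤ m)
      = min (height w) m - min 0 m := by
  induction w using List.reverseRecOn with
  | nil => simp [stepCount, height]
  | append_singleton w y ih =>
    rw [stepCount_append_singleton, stepCount_append_singleton, height_append_singleton]
    simp only [min_def] at ih ⊢
    cases y <;> simp only [Bool.false_eq_true, Bool.true_eq_false, false_and, true_and,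
      if_true, if_false] <;> split_ifs at ih ⊢ <;> omega

lemma stepCount_down_eq_up {w : List Bool} (hw : height w = 0) (m : ℤ) :
    stepCount w (fun x d => x = false ∧ d ≤ m) = stepCount w (fun x d => x = true ∧ d < m) := by
  have := stepCount_up_sub_down w m
  rw [hw] at this
  omega

lemma stepCount_balanced {w : List Bool} (hw : height w = 0) :
    stepCount w (fun x d => x = false ∧ 2 ≤ d) + stepCount w (fun x d => x = true ∧ d ≤ -2)
      + stepCount w (fun _ d => d = 0) = w.count false := by
  have hN : stepCount w (fun x _ => x = false)
      = stepCount w (fun x d => x = false ∧ 2 ≤ d) + stepCount w (fun x d => x = false ∧ d ≤ 1) :=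
    stepCount_eq_add (by grind) (by grind)
  have hE₁ : stepCount w (fun x d => x = true ∧ d < 1)
      = stepCount w (fun x d => x = true ∧ d < 0) + stepCount w (fun x d => x = true ∧ d = 0) :=
    stepCount_eq_add (by grind) (by grind)
  have hN₀ : stepCount w (fun x d => x = false ∧ d ≤ 0)
      = stepCount w (fun x d => x = false ∧ d ≤ -1) + stepCount w (fun x d => x = false ∧ d = 0) :=
    stepCount_eq_add (by grind) (by grind)
  have hE₂ : stepCount w (fun x d => x = true ∧ d < -1)
      = stepCount w (fun x d => x = true ∧ d ≤ -2) :=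
    stepCount_congr (by grind)
  have hZ : stepCount w (fun _ d => d = 0)
      = stepCount w (fun x d => x = true ∧ d = 0) + stepCount w (fun x d => x = false ∧ d = 0) :=
    stepCount_eq_add (by grind) (by grind)
  have hcross₁ := stepCount_down_eq_up hw 1
  have hcross₀ := stepCount_down_eq_up hw 0
  have hcrossNeg := stepCount_down_eq_up hw (-1)
  rw [← stepCount_letter]
  omega

end stepCount

lemma card_filter_height_take_eq_zero {n k : ℕ} (hk : k ≤ n) :
    #{w ∈ wordsWithCounts n n | height (w.take (2 * k)) = 0}
      = Nat.centralBinom k * Nat.centralBinom (n - k) := by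
  simp only [Nat.centralBinom_eq_two_mul_choose, two_mul, ← card_wordsWithCounts, ← card_product]
  refine card_nbij' (fun w => (w.take (k + k), w.drop (k + k))) (fun p => p.1 ++ p.2)
    ?_ ?_ (fun w _ => List.take_append_drop _ w) ?_
  · intro w hw
    simp only [mem_coe, mem_filter, height_eq_zero_iff, mem_wordsWithCounts] at hw
    have hlen := List.count_true_add_count_false (w.take (k + k))
    have htrue := congrArg (List.count true) (List.take_append_drop (k + k) w)
    have hfalse := congrArg (List.count false) (List.take_append_drop (k + k) w)
    rw [List.count_append] at htrue hfalse
    rw [List.length_take, ← List.count_true_add_count_false w] at hlen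
    simp only [mem_coe, mem_product, mem_wordsWithCounts]
    omega
  · rintro ⟨u, v⟩ huv
    simp only [mem_coe, mem_product, mem_wordsWithCounts] at huv
    have hu : u.length = k + k := by rw [← List.count_true_add_count_false, huv.1.1, huv.1.2]
    simp only [mem_coe, mem_filter, height_eq_zero_iff, mem_wordsWithCounts,
      List.count_append, List.take_left' hu]
    omega
  · rintro ⟨u, v⟩ huv
    simp only [mem_coe, mem_product, mem_wordsWithCounts] at huv
    have hu : u.length = k + k := by rw [← List.count_true_add_count_false, huv.1.1, huv.1.2]
    simp [List.take_left' hu, List.drop_left' hu]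

lemma card_filter_height_take_odd_eq_zero {n k : ℕ} (hk : k < n) :
    #{w ∈ wordsWithCounts n n | height (w.take (2 * k + 1)) = 0} = 0 := by
  refine card_eq_zero.2 (filter_eq_empty_iff.2 fun w hw h => ?_)
  rw [height_eq_zero_iff] at h
  have := List.count_true_add_count_false (w.take (2 * k + 1))
  rw [List.length_take, length_of_mem_wordsWithCounts hw] at this
  omega

lemma sum_stepCount_height_eq_zero (n : ℕ) :
    ∑ w ∈ wordsWithCounts n n, stepCount w (fun _ d => d = 0)
      = ∑ k ∈ range n, Nat.centralBinom k * Nat.centralBinom (n - k) := by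
  calc ∑ w ∈ wordsWithCounts n n, stepCount w (fun _ d => d = 0)
      = ∑ j ∈ range (2 * n), #{w ∈ wordsWithCounts n n | height (w.take j) = 0} := by
        simp only [card_filter]
        rw [sum_comm]
        refine sum_congr rfl fun w hw => ?_
        rw [stepCount, card_filter, length_of_mem_wordsWithCounts hw, two_mul]
        exact sum_congr rfl fun j _ => by congr
    _ = ∑ k ∈ range n, Nat.centralBinom k * Nat.centralBinom (n - k) := by
        rw [sum_range_two_mul]
        refine sum_congr rfl fun k hk => ?_
        rw [mem_range] at hk
        rw [card_filter_height_take_eq_zero hk.le, card_filter_height_take_odd_eq_zero hk, add_zero]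

lemma sum_stepCount_up_eq_down (n : ℕ) :
    ∑ w ∈ wordsWithCounts n n, stepCount w (fun x d => x = true ∧ d ≤ -2)
      = ∑ w ∈ wordsWithCounts n n, stepCount w (fun x d => x = false ∧ 2 ≤ d) := by
  refine sum_nbij' (List.map not) (List.map not) (fun w hw => map_not_mem_wordsWithCounts hw)
    (fun w hw => map_not_mem_wordsWithCounts hw) (fun w _ => by simp [Function.comp_def])
    (fun w _ => by simp [Function.comp_def]) fun w _ => ?_
  rw [stepCount_map_not]
  exact stepCount_congr (by grind)

lemma two_mul_sum_stepCount_add_four_pow (n : ℕ) :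
    2 * ∑ w ∈ wordsWithCounts n n, stepCount w (fun x d => x = false ∧ 2 ≤ d) + 4 ^ n
      = (n + 1) * n.centralBinom := by
  have hcount : ∑ w ∈ wordsWithCounts n n, w.count false = n * n.centralBinom := by
    rw [sum_congr rfl fun w hw => (mem_wordsWithCounts.1 hw).2, sum_const, card_wordsWithCounts,
      smul_eq_mul, ← two_mul, ← Nat.centralBinom_eq_two_mul_choose, mul_comm]
  rw [← sum_congr rfl fun w hw => stepCount_balanced (height_eq_zero_of_mem hw), sum_add_distrib,
    sum_add_distrib, sum_stepCount_up_eq_down, sum_stepCount_height_eq_zero] at hcount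
  have := sum_range_centralBinom_mul_add n
  linarith

section occPos

variable {w : List Bool} {b : Bool}

lemma occPos_append (u v : List Bool) (b : Bool) :
    occPos (u ++ v) b = occPos u b ++ (occPos v b).map (u.length + ·) := by
  unfold occPos
  rw [List.length_append, List.range_add, List.filter_append, List.filter_map]
  congr 1
  · exact List.filter_congr fun j hj => by rw [List.getD_append _ _ _ _ (List.mem_range.1 hj)]
  · exact congrArg _ (List.filter_congr fun j _ => by simp [List.getElem?_append_right])

lemma mem_occPos {j : ℕ} : j ∈ occPos w b ↔ j < w.length ∧ w.getD j true = b := by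
  rw [occPos, List.mem_filter, List.mem_range]
  exact and_congr_right fun h => by simp [List.getElem?_eq_getElem h]

lemma length_occPos : (occPos w b).length = w.count b := by
  induction w using List.reverseRecOn with
  | nil => rfl
  | append_singleton w x ih =>
    rw [occPos_append, List.length_append, List.length_map, ih, List.count_append]
    cases x <;> cases b <;> rfl

lemma getD_occPos_mem {k : ℕ} (hk : k < w.count b) : (occPos w b).getD k 0 ∈ occPos w b := by
  rw [List.getD_eq_getElem _ _ (length_occPos ▸ hk)]
  exact List.getElem_mem _

lemma getD_occPos_lt_iff {k q : ℕ} (hk : k < w.count b) :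
    (occPos w b).getD k 0 < q ↔ k < (w.take q).count b := by
  by_cases hq : w.length ≤ q
  · have := (mem_occPos.1 (getD_occPos_mem hk)).1
    rw [List.take_of_length_le hq]
    exact iff_of_true (by omega) hk
  have hlen : (w.take q).length = q := List.length_take_of_le (by omega)
  have hcount := congrArg (List.count b) (List.take_append_drop q w)
  rw [List.count_append, ← length_occPos, ← length_occPos] at hcount
  conv_lhs => rw [← List.take_append_drop q w, occPos_append, hlen]
  rw [← length_occPos]
  by_cases hk' : k < (occPos (w.take q) b).length
  · rw [List.getD_append _ _ _ _ hk']
    have := (mem_occPos.1 (List.getD_eq_getElem _ 0 hk' ▸ List.getElem_mem hk')).1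
    exact iff_of_true (by omega) hk'
  · rw [List.getD_append_right _ _ _ _ (by omega),
      List.getD_eq_getElem _ _ (by rw [List.length_map]; omega), List.getElem_map]
    exact iff_of_false (by omega) hk'

lemma count_take_getD_occPos {k : ℕ} (hk : k < w.count b) :
    (w.take ((occPos w b).getD k 0)).count b = k := by
  set p := (occPos w b).getD k 0
  obtain ⟨hp, hpb⟩ := mem_occPos.1 (getD_occPos_mem hk)
  have hlt := (getD_occPos_lt_iff (q := p + 1) hk).1 p.lt_succ_self
  have hnlt := (getD_occPos_lt_iff (q := p) hk).not.1 p.lt_irrefl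
  rw [List.take_add_one, List.getElem?_eq_getElem hp, ← List.getD_eq_getElem _ true hp, hpb,
    List.count_append] at hlt
  simp only [Option.toList_some, List.count_singleton_self] at hlt
  omega

lemma getD_occPos_lt_getD_occPos {i k : ℕ} (hik : i < k) (hk : k < w.count b) :
    (occPos w b).getD i 0 < (occPos w b).getD k 0 := by
  rw [getD_occPos_lt_iff (hik.trans hk), count_take_getD_occPos hk]
  exact hik

lemma getD_occPos_count_take {j : ℕ} (hj : j ∈ occPos w b) :
    (occPos w b).getD ((w.take j).count b) 0 = j := by
  obtain ⟨k, hk, rfl⟩ := List.mem_iff_getElem.1 hj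
  rw [← List.getD_eq_getElem _ 0 hk, count_take_getD_occPos (length_occPos ▸ hk)]

end occPos

lemma filter_range_contains_eq {l : List ℕ} {m : ℕ} (hl : l.Pairwise (· < ·))
    (hm : ∀ x ∈ l, x < m) :
    (List.range m).filter (fun j => l.contains j) = l :=
  (List.pairwise_lt_range.filter _).eq_of_mem_iff hl fun j => by
    simp only [List.mem_filter, List.mem_range, List.contains_iff_mem]
    exact ⟨And.right, fun h => ⟨hm j h, h⟩⟩

lemma pairedSubword_succ_eq_P1_iff {w : List Bool} {k : ℕ} (hE : k + 1 < w.count true)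
    (hN : k + 1 < w.count false) :
    pairedSubword w (k + 1) = P1 ↔ (occPos w true).getD (k + 1) 0 < (occPos w false).getD k 0 := by
  set p₀ := (occPos w true).getD k 0
  set p₁ := (occPos w true).getD (k + 1) 0
  set q₀ := (occPos w false).getD k 0
  set q₁ := (occPos w false).getD (k + 1) 0
  obtain ⟨hp₀, vp₀⟩ : p₀ < w.length ∧ w.getD p₀ true = true :=
    mem_occPos.1 (getD_occPos_mem (k.lt_succ_self.trans hE))
  obtain ⟨hp₁, vp₁⟩ : p₁ < w.length ∧ w.getD p₁ true = true := mem_occPos.1 (getD_occPos_mem hE)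
  obtain ⟨hq₀, vq₀⟩ : q₀ < w.length ∧ w.getD q₀ true = false :=
    mem_occPos.1 (getD_occPos_mem (k.lt_succ_self.trans hN))
  obtain ⟨hq₁, vq₁⟩ : q₁ < w.length ∧ w.getD q₁ true = false := mem_occPos.1 (getD_occPos_mem hN)
  have hp : p₀ < p₁ := getD_occPos_lt_getD_occPos k.lt_succ_self hE
  have hq : q₀ < q₁ := getD_occPos_lt_getD_occPos k.lt_succ_self hN
  have hsub : pairedSubword w (k + 1)
      = ((List.range w.length).filter fun j => [p₀, p₁, q₀, q₁].contains j).map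
          (w.getD · true) := rfl
  rw [hsub]
  constructor
  · intro h
    by_contra hlt
    have hqp : q₀ < p₁ := lt_of_le_of_ne (not_lt.1 hlt) fun h' => by rw [h', vp₁] at vq₀; cases vq₀
    -- then the subword has an `N` before an `E`, which `EENN` does not
    have hsl : List.Sublist [q₀, p₁]
        ((List.range w.length).filter fun j => [p₀, p₁, q₀, q₁].contains j) := by
      rw [← filter_range_contains_eq (m := w.length) (l := [q₀, p₁]) (by simp [hqp]) (by simp [*])]
      exact List.monotone_filter_right _ fun j => by grind
    have := h ▸ hsl.map (w.getD · true)
    simp only [List.map_cons, List.map_nil, vq₀, vp₁] at this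
    exact absurd this (by decide)
  · intro h
    rw [filter_range_contains_eq (by grind) (by simp [*])]
    simp only [List.map_cons, List.map_nil, vp₀, vp₁, vq₀, vq₁]
    rfl

lemma pairedSubword_succ_eq_P1_iff_two_le_height {w : List Bool} {k : ℕ}
    (hE : k + 1 < w.count true) (hN : k + 1 < w.count false) :
    pairedSubword w (k + 1) = P1 ↔ 2 ≤ height (w.take ((occPos w false).getD k 0)) := by
  rw [pairedSubword_succ_eq_P1_iff hE hN, getD_occPos_lt_iff hE, height,
    count_take_getD_occPos (k.lt_succ_self.trans hN)]
  omega

lemma pmch_P1_eq_stepCount {n : ℕ} {w : List Bool} (hw : memL n w) :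
    pmch n P1 w = stepCount w (fun x d => x = false ∧ 2 ≤ d) := by
  obtain ⟨hE, hN⟩ := hw
  refine card_nbij' (fun i => (occPos w false).getD (i - 1) 0) (fun j => (w.take j).count false + 1)
    ?_ ?_ ?_ ?_ <;> intro i hi <;> simp only [mem_coe, mem_filter, mem_Icc, mem_range] at hi ⊢
  · obtain ⟨⟨hi₁, hin⟩, hP⟩ := hi
    obtain ⟨k, rfl⟩ : ∃ k, i = k + 1 := ⟨i - 1, by omega⟩
    rw [pairedSubword_succ_eq_P1_iff_two_le_height (by omega) (by omega)] at hP
    exact ⟨(mem_occPos.1 (getD_occPos_mem (w := w) (by omega))).1,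
      (mem_occPos.1 (getD_occPos_mem (w := w) (by omega))).2, hP⟩
  · obtain ⟨hj, vj, h2⟩ := hi
    have hmem := getD_occPos_count_take (mem_occPos.2 ⟨hj, vj⟩)
    have hle : (w.take i).count true ≤ n := hE ▸ (List.take_sublist i w).count_le true
    rw [height] at h2
    refine ⟨by omega, ?_⟩
    rw [pairedSubword_succ_eq_P1_iff_two_le_height (by omega) (by omega), hmem, height]
    exact h2
  · rw [count_take_getD_occPos (by omega)]
    omega
  · rw [Nat.add_sub_cancel]
    exact getD_occPos_count_take (mem_occPos.2 ⟨hi.1, hi.2.1⟩)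

theorem total_P1_matches_general (n : ℕ) :
    ∑ᶠ w ∈ {w : List Bool | memL n w}, pmch n P1 w
      = ((n+1) * (2*n).choose n - 4^n) / 2 := by
  have hset : {w : List Bool | memL n w} = wordsWithCounts n n :=
    Set.ext fun _ => mem_wordsWithCounts.symm
  rw [hset, finsum_mem_coe_finset,
    sum_congr rfl fun w hw => pmch_P1_eq_stepCount (mem_wordsWithCounts.1 hw),
    ← Nat.centralBinom_eq_two_mul_choose, ← two_mul_sum_stepCount_add_four_pow]
  omega

theorem total_P1_matches (n : ℕ) (hn : 1 ≤ n) :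
    ∑ᶠ w ∈ {w : List Bool | memL n w}, pmch n P1 w
      = ((n+1) * (2*n).choose n - 4^n) / 2 :=
  total_P1_matches_general n
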